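/- arXiv:math/0407327 — 8 statements merged into one kernel-verified Lean document; each statement's English description precedes it below -/
import Mathlib

section
/- Define a_n = sum over (p,q) with p+q=n of a^p * b^q * binomial(n,p)^2, for complex numbers a, b. Then for all n ≥ 2, n*a_n - (2n-1)*(a+b)*a_{n-1} + (n-1)*(a-b)^2*a_{n-2} = 0. -/
/-!
Every term of the recurrence is a homogeneous form of degree `n = k + 2` in `a, b`. After peeling
off the monomials `a ^ n` and `b ^ n` (whose coefficients cancel), each becomes `a * b` times a
form of degree `k`, and the coefficient of `a ^ p * b ^ q` (`p + q = k`) in the resulting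
combination only involves `x = C(k, q + 1)`, `y = C(k, p)`, `z = C(k, p + 1)`, by Pascal's rule.
It vanishes because `(q + 1) x = p y` and `(p + 1) z = q y`.
-/

open Finset

lemma choose_sq_three_term (p q : ℕ) :
    (p + q + 2) * (p + q + 2).choose (p + 1) ^ 2
        + (p + q + 1) * ((p + q).choose (q + 1) ^ 2 + (p + q).choose (p + 1) ^ 2)
      = (2 * (p + q) + 3) * ((p + q + 1).choose (q + 1) ^ 2 + (p + q + 1).choose (p + 1) ^ 2)
        + 2 * (p + q + 1) * (p + q).choose p ^ 2 := by
  have hsymm : (p + q).choose q = (p + q).choose p := Nat.choose_symm_add.symm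
  have hx : (q + 1) * (p + q).choose (q + 1) = p * (p + q).choose p := by
    rw [mul_comm, Nat.choose_succ_right_eq, hsymm, Nat.add_sub_cancel, mul_comm]
  have hz : (p + 1) * (p + q).choose (p + 1) = q * (p + q).choose p := by
    rw [mul_comm, Nat.choose_succ_right_eq, Nat.add_sub_cancel_left, mul_comm]
  have hxy : (p + q + 1).choose (q + 1) = (p + q).choose (q + 1) + (p + q).choose p := by
    rw [Nat.choose_succ_succ', hsymm, add_comm]
  have hyz : (p + q + 1).choose (p + 1) = (p + q).choose p + (p + q).choose (p + 1) :=
    Nat.choose_succ_succ' _ _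
  have hxyz : (p + q + 2).choose (p + 1)
      = (p + q + 1).choose (q + 1) + (p + q + 1).choose (p + 1) := by
    rw [Nat.choose_succ_succ', show p + q + 1 = p + (q + 1) by ring, Nat.choose_symm_add]
  rw [hxyz, hxy, hyz]
  generalize (p + q).choose (q + 1) = x at hx ⊢
  generalize (p + q).choose p = y at hx hz ⊢
  generalize (p + q).choose (p + 1) = z at hz ⊢
  apply Nat.eq_of_mul_eq_mul_left (Nat.mul_pos p.succ_pos q.succ_pos)
  zify at hx hz ⊢
  linear_combination (2 * (p + 1) * (y + (p + q + 2) * z) : ℤ) * hx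
    + (2 * (q + 1 + p * (p + q + 2)) * y : ℤ) * hz

variable {R : Type*} [CommRing R] (a b : R)

def homSum (n : ℕ) (w : ℕ → ℕ → R) : R :=
  ∑ pq ∈ antidiagonal n, a ^ pq.1 * b ^ pq.2 * w pq.1 pq.2

lemma homSum_succ_left (n : ℕ) (w : ℕ → ℕ → R) :
    homSum a b (n + 1) w
      = b ^ (n + 1) * w 0 (n + 1) + a * homSum a b n (fun p q ↦ w (p + 1) q) := by
  simp only [homSum, Nat.sum_antidiagonal_succ, mul_sum]
  congr 1
  · ring
  · exact sum_congr rfl fun _ _ ↦ by ring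

lemma homSum_succ_right (n : ℕ) (w : ℕ → ℕ → R) :
    homSum a b (n + 1) w
      = a ^ (n + 1) * w (n + 1) 0 + b * homSum a b n (fun p q ↦ w p (q + 1)) := by
  simp only [homSum, Nat.sum_antidiagonal_succ', mul_sum]
  congr 1
  · ring
  · exact sum_congr rfl fun _ _ ↦ by ring

lemma homSum_choose_sq_symm (n : ℕ) :
    homSum a b n (fun p _ ↦ (n.choose p : R) ^ 2)
      = homSum a b n (fun _ q ↦ (n.choose q : R) ^ 2) := by
  refine sum_congr rfl fun pq hpq ↦ ?_
  dsimp only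
  rw [Nat.choose_symm_of_eq_add (mem_antidiagonal.mp hpq).symm]

lemma mul_homSum_choose_sq_left (n : ℕ) :
    a * homSum a b n (fun p _ ↦ (n.choose p : R) ^ 2)
      = a ^ (n + 1) + b * homSum a b n (fun _ q ↦ (n.choose (q + 1) : R) ^ 2) := by
  have h := (homSum_succ_left a b n fun _ q ↦ (n.choose q : R) ^ 2).symm.trans
    (homSum_succ_right a b n _)
  simp only [Nat.choose_succ_self, Nat.choose_zero_right] at h
  rw [homSum_choose_sq_symm]
  linear_combination h

lemma mul_homSum_choose_sq_right (n : ℕ) :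
    b * homSum a b n (fun p _ ↦ (n.choose p : R) ^ 2)
      = b ^ (n + 1) + a * homSum a b n (fun p _ ↦ (n.choose (p + 1) : R) ^ 2) := by
  have h := (homSum_succ_right a b n fun p _ ↦ (n.choose p : R) ^ 2).symm.trans
    (homSum_succ_left a b n _)
  simp only [Nat.choose_succ_self, Nat.choose_zero_right] at h
  linear_combination h

lemma mul_homSum_choose_sq_succ_left (n : ℕ) :
    a * homSum a b (n + 1) (fun p _ ↦ ((n + 1).choose p : R) ^ 2)
      = a ^ (n + 2) + a * b * homSum a b n (fun _ q ↦ ((n + 1).choose (q + 1) : R) ^ 2) := by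
  rw [mul_homSum_choose_sq_left, homSum_succ_left]
  simp only [Nat.choose_succ_self]
  ring

lemma mul_homSum_choose_sq_succ_right (n : ℕ) :
    b * homSum a b (n + 1) (fun p _ ↦ ((n + 1).choose p : R) ^ 2)
      = b ^ (n + 2) + a * b * homSum a b n (fun p _ ↦ ((n + 1).choose (p + 1) : R) ^ 2) := by
  rw [mul_homSum_choose_sq_right, homSum_succ_right]
  simp only [Nat.choose_succ_self]
  ring

lemma homSum_choose_sq_add_two (n : ℕ) :
    homSum a b (n + 2) (fun p _ ↦ ((n + 2).choose p : R) ^ 2)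
      = a ^ (n + 2) + b ^ (n + 2)
        + a * b * homSum a b n (fun p _ ↦ ((n + 2).choose (p + 1) : R) ^ 2) := by
  rw [homSum_succ_left, homSum_succ_right]
  simp only [Nat.choose_self, Nat.choose_zero_right]
  ring

lemma homSum_choose_sq_interior (k : ℕ) :
    (k + 2 : R) * homSum a b k (fun p _ ↦ ((k + 2).choose (p + 1) : R) ^ 2)
        + (k + 1 : R) * (homSum a b k (fun _ q ↦ (k.choose (q + 1) : R) ^ 2)
          + homSum a b k (fun p _ ↦ (k.choose (p + 1) : R) ^ 2))
      = (2 * k + 3 : R) * (homSum a b k (fun _ q ↦ ((k + 1).choose (q + 1) : R) ^ 2)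
          + homSum a b k (fun p _ ↦ ((k + 1).choose (p + 1) : R) ^ 2))
        + 2 * (k + 1 : R) * homSum a b k (fun p _ ↦ (k.choose p : R) ^ 2) := by
  simp only [homSum, mul_sum, ← sum_add_distrib]
  refine sum_congr rfl fun pq hpq ↦ ?_
  obtain ⟨p, q⟩ := pq
  obtain rfl : p + q = k := mem_antidiagonal.mp hpq
  have h := congrArg (Nat.cast : ℕ → R) (choose_sq_three_term p q)
  push_cast at h ⊢
  linear_combination (a ^ p * b ^ q) * h

theorem recurrence_N2 (a b : ℂ) (f : ℕ → ℂ)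
    (hf : ∀ n : ℕ, f n = ∑ pq ∈ Finset.HasAntidiagonal.antidiagonal n,
      a ^ pq.1 * b ^ pq.2 * ((n.choose pq.1 : ℂ)) ^ 2) :
    ∀ n : ℕ, 2 ≤ n →
      (n : ℂ) * f n - (2 * (n : ℂ) - 1) * (a + b) * f (n - 1)
        + ((n : ℂ) - 1) * (a - b) ^ 2 * f (n - 2) = 0 := by
  intro n hn
  obtain ⟨k, rfl⟩ := Nat.exists_eq_add_of_le' hn
  have hf' (m : ℕ) : f m = homSum a b m (fun p _ ↦ (m.choose p : ℂ) ^ 2) := hf m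
  rw [Nat.add_sub_cancel, show k + 2 - 1 = k + 1 by omega, hf', hf', hf']
  have ha₁ := mul_homSum_choose_sq_succ_left a b k
  have hb₁ := mul_homSum_choose_sq_succ_right a b k
  have ha₀ := mul_homSum_choose_sq_left a b k
  have hb₀ := mul_homSum_choose_sq_right a b k
  push_cast
  linear_combination (k + 2 : ℂ) * homSum_choose_sq_add_two a b k
    - (2 * k + 3 : ℂ) * (ha₁ + hb₁) + (k + 1 : ℂ) * (a * ha₀ + b * hb₀)
    + a * b * homSum_choose_sq_interior a b k
end

section
/- Let ω be a primitive third root of unity and a_n = sum over p+q+r=n of ω^(p-q) * (n!/(p!q!r!))^2. Then a_n = 0 whenever n is not divisible by 3. -/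
/-!
The cyclic rotation `(p, q, r) ↦ (r, p, q)` of the summation index fixes the multinomial
coefficient, while, as `ω ^ 3 = 1`, the weight `ω ^ (p - q)` of `(r, p, q)` is `ω ^ (p + q + r)`
times that of `(p, q, r)`. Hence `f n = ω ^ n * f n`, and `ω ^ n ≠ 1` when `3 ∤ n` because `ω`
has order `3`.
-/

open Finset

theorem Nat.multinomial_univ_three_rotate (p q r : ℕ) :
    Nat.multinomial univ ![r, p, q] = Nat.multinomial univ ![p, q, r] := by
  rw [Nat.multinomial_univ_three, Nat.multinomial_univ_three]
  ring_nf

theorem Finset.Nat.sum_antidiagonal_antidiagonal_rotate {M : Type*} [AddCommMonoid M] (n : ℕ)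
    (g : ℕ → ℕ → ℕ → M) :
    ∑ x ∈ antidiagonal n, ∑ y ∈ antidiagonal x.2, g y.2 x.1 y.1 =
      ∑ x ∈ antidiagonal n, ∑ y ∈ antidiagonal x.2, g x.1 y.1 y.2 := by
  rw [sum_sigma', sum_sigma']
  refine sum_nbij' (fun z => ⟨(z.2.2, z.1.1 + z.2.1), (z.1.1, z.2.1)⟩)
    (fun z => ⟨(z.2.1, z.2.2 + z.1.1), (z.2.2, z.1.1)⟩) ?_ ?_ ?_ ?_ fun _ _ => rfl
  all_goals
    rintro ⟨⟨a, s⟩, b, c⟩ hz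
    simp only [mem_sigma, HasAntidiagonal.mem_antidiagonal, and_true] at hz ⊢
    obtain ⟨hn, rfl⟩ := hz
    first | omega | rfl

theorem pow_add_add_mul_pow_mul_sq_pow {M : Type*} [CommMonoid M] {ω : M} (hω3 : ω ^ 3 = 1)
    (p q r : ℕ) : ω ^ (p + q + r) * (ω ^ p * (ω ^ 2) ^ q) = ω ^ r * (ω ^ 2) ^ p := by
  calc ω ^ (p + q + r) * (ω ^ p * (ω ^ 2) ^ q)
      = ω ^ r * (ω ^ 2) ^ p * (ω ^ 3) ^ q := by simp only [← pow_mul, ← pow_add]; ring_nf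
    _ = ω ^ r * (ω ^ 2) ^ p := by rw [hω3, one_pow, mul_one]

theorem omega_vanishing (ω : ℂ) (hω3 : ω ^ 3 = 1) (hω1 : ω ≠ 1) (f : ℕ → ℂ)
    (hf : ∀ n : ℕ, f n = ∑ x ∈ Finset.HasAntidiagonal.antidiagonal n, ∑ y ∈ Finset.HasAntidiagonal.antidiagonal x.2,
      ω ^ x.1 * (ω ^ 2) ^ y.1 *
        ((Nat.multinomial Finset.univ ![x.1, y.1, y.2] : ℂ)) ^ 2) :
    ∀ n : ℕ, ¬ (3 ∣ n) → f n = 0 := by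
  intro n hn
  have hωn : ω ^ n ≠ 1 := fun h => hn (orderOf_eq_prime hω3 hω1 ▸ orderOf_dvd_of_pow_eq_one h)
  let g : ℕ → ℕ → ℕ → ℂ := fun p q r =>
    ω ^ p * (ω ^ 2) ^ q * (Nat.multinomial univ ![p, q, r] : ℂ) ^ 2
  have hfg : f n = ∑ x ∈ antidiagonal n, ∑ y ∈ antidiagonal x.2, g x.1 y.1 y.2 := hf n
  have hrot : ω ^ n * f n = f n := calc
    ω ^ n * f n = ∑ x ∈ antidiagonal n, ∑ y ∈ antidiagonal x.2, g y.2 x.1 y.1 := by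
      rw [hfg, mul_sum]
      refine sum_congr rfl fun x hx => (mul_sum _ _ _).trans (sum_congr rfl fun y hy => ?_)
      rw [HasAntidiagonal.mem_antidiagonal] at hx hy
      simp only [g]
      rw [← hx, ← hy, ← add_assoc, ← mul_assoc, pow_add_add_mul_pow_mul_sq_pow hω3,
        ← Nat.multinomial_univ_three_rotate x.1]
    _ = f n := by rw [Nat.sum_antidiagonal_antidiagonal_rotate, hfg]
  exact (mul_left_eq_self₀.mp hrot).resolve_left hωn
end

section
/- Let ω be a primitive third root of unity and a_n = sum over p+q+r=n of ω^(p-q) * (n!/(p!q!r!))^2. Then every a_n is an integer (lies in the image of ℤ in ℂ). -/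
/-!
Since `ω² + ω + 1 = 0`, every power of `ω` is an integer combination of `1` and `ω`, so
`a_n = A + B ω` with `A, B ∈ ℤ`. Swapping `p` and `q` preserves the multinomial coefficient and
turns `ω^(p+2q)` into `ω^(2p+q)`, whose `ω`-coordinate is the opposite one, as
`(p + 2q) + (2p + q) ≡ 0 mod 3`. Hence `B = -B = 0`.
-/

open Finset

theorem Finset.Nat.sum_antidiagonal_antidiagonal_comm {M : Type*} [AddCommMonoid M]
    (g : ℕ → ℕ → ℕ → M) (n : ℕ) :
    ∑ x ∈ antidiagonal n, ∑ y ∈ antidiagonal x.2, g x.1 y.1 y.2 =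
      ∑ x ∈ antidiagonal n, ∑ y ∈ antidiagonal x.2, g y.1 x.1 y.2 := by
  -- `(p, q, r) ↦ (q, p, r)`, a triple being stored as `⟨(p, q + r), (q, r)⟩`
  set swap : (Σ _ : ℕ × ℕ, ℕ × ℕ) → Σ _ : ℕ × ℕ, ℕ × ℕ :=
    fun x ↦ ⟨(x.2.1, x.1.1 + x.2.2), (x.1.1, x.2.2)⟩
  simp only [sum_sigma']
  refine sum_nbij' swap swap ?_ ?_ ?_ ?_ fun _ _ ↦ rfl <;>
  · rintro ⟨⟨p, m⟩, ⟨q, r⟩⟩ h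
    simp only [swap, mem_sigma, HasAntidiagonal.mem_antidiagonal, and_true] at h ⊢
    first | omega | (obtain ⟨-, rfl⟩ := h; rfl)

def eisensteinCoord₀ (k : ℕ) : ℤ :=
  if k % 3 = 0 then 1 else if k % 3 = 1 then 0 else -1

def eisensteinCoord₁ (k : ℕ) : ℤ :=
  if k % 3 = 0 then 0 else if k % 3 = 1 then 1 else -1

theorem pow_eq_eisensteinCoord {R : Type*} [CommRing R] {ω : R} (h : ω ^ 2 + ω + 1 = 0)
    (k : ℕ) : ω ^ k = eisensteinCoord₀ k + eisensteinCoord₁ k * ω := by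
  have h3 : ω ^ 3 = 1 := by linear_combination (ω - 1) * h
  rw [pow_eq_pow_mod k h3, eisensteinCoord₀, eisensteinCoord₁]
  have : k % 3 = 0 ∨ k % 3 = 1 ∨ k % 3 = 2 := by omega
  rcases this with hk | hk | hk <;> simp only [hk] <;> norm_num
  linear_combination h

theorem eisensteinCoord₁_add_eq_zero {k l : ℕ} (h : 3 ∣ k + l) :
    eisensteinCoord₁ k + eisensteinCoord₁ l = 0 := by
  unfold eisensteinCoord₁
  split_ifs <;> omega

theorem exists_intCast_eq_sum_pow_mul_sq_pow_of_symm {R : Type*} [CommRing R] {ω : R}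
    (h : ω ^ 2 + ω + 1 = 0) (w : ℕ → ℕ → ℕ → ℤ) (hw : ∀ p q r, w p q r = w q p r)
    (n : ℕ) :
    ∃ k : ℤ, ∑ x ∈ antidiagonal n, ∑ y ∈ antidiagonal x.2,
      ω ^ x.1 * (ω ^ 2) ^ y.1 * w x.1 y.1 y.2 = k := by
  set S₀ := ∑ x ∈ antidiagonal n, ∑ y ∈ antidiagonal x.2,
    eisensteinCoord₀ (x.1 + 2 * y.1) * w x.1 y.1 y.2
  set S₁ := ∑ x ∈ antidiagonal n, ∑ y ∈ antidiagonal x.2,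
    eisensteinCoord₁ (x.1 + 2 * y.1) * w x.1 y.1 y.2
  have hS₁ : S₁ = 0 := by
    have hswap : S₁ = ∑ x ∈ antidiagonal n, ∑ y ∈ antidiagonal x.2,
        eisensteinCoord₁ (y.1 + 2 * x.1) * w y.1 x.1 y.2 :=
      Finset.Nat.sum_antidiagonal_antidiagonal_comm
        (fun p q r ↦ eisensteinCoord₁ (p + 2 * q) * w p q r) n
    have hanti : S₁ + S₁ = 0 := by
      nth_rw 2 [hswap]
      simp only [S₁, ← sum_add_distrib]
      refine sum_eq_zero fun x _ ↦ sum_eq_zero fun y _ ↦ ?_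
      rw [← hw, ← add_mul, eisensteinCoord₁_add_eq_zero ⟨x.1 + y.1, by ring⟩, zero_mul]
    omega
  refine ⟨S₀, ?_⟩
  calc _ = ∑ x ∈ antidiagonal n, ∑ y ∈ antidiagonal x.2,
        ((eisensteinCoord₀ (x.1 + 2 * y.1) * w x.1 y.1 y.2 : ℤ) +
          (eisensteinCoord₁ (x.1 + 2 * y.1) * w x.1 y.1 y.2 : ℤ) * ω : R) := by
        refine sum_congr rfl fun x _ ↦ sum_congr rfl fun y _ ↦ ?_
        rw [← pow_mul, ← pow_add, pow_eq_eisensteinCoord h]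
        push_cast
        ring
    _ = S₀ + S₁ * ω := by
        push_cast [S₀, S₁, sum_add_distrib, sum_mul]
        rfl
    _ = S₀ := by rw [hS₁, Int.cast_zero, zero_mul, add_zero]

theorem Nat.multinomial_univ_three_comm (p q r : ℕ) :
    Nat.multinomial univ ![p, q, r] = Nat.multinomial univ ![q, p, r] := by
  rw [Nat.multinomial_univ_three, Nat.multinomial_univ_three, add_comm p, mul_comm p.factorial]

theorem omega_integrality (ω : ℂ) (hω3 : ω ^ 3 = 1) (hω1 : ω ≠ 1) (f : ℕ → ℂ)
    (hf : ∀ n : ℕ, f n = ∑ x ∈ Finset.HasAntidiagonal.antidiagonal n, ∑ y ∈ Finset.HasAntidiagonal.antidiagonal x.2,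
      ω ^ x.1 * (ω ^ 2) ^ y.1 *
        ((Nat.multinomial Finset.univ ![x.1, y.1, y.2] : ℂ)) ^ 2) :
    ∀ n : ℕ, ∃ k : ℤ, f n = (k : ℂ) := by
  have hquad : ω ^ 2 + ω + 1 = 0 := by
    have : (ω - 1) * (ω ^ 2 + ω + 1) = 0 := by linear_combination hω3
    exact (mul_eq_zero.mp this).resolve_left (sub_ne_zero.mpr hω1)
  intro n
  obtain ⟨k, hk⟩ := exists_intCast_eq_sum_pow_mul_sq_pow_of_symm hquad
    (fun p q r ↦ (Nat.multinomial univ ![p, q, r] : ℤ) ^ 2)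
    (fun p q r ↦ by rw [Nat.multinomial_univ_three_comm]) n
  exact ⟨k, by rw [hf, ← hk]; push_cast; rfl⟩
end

section
/- Define a_n = sum over triples (p,q,r) of non-negative integers with p+q+r=n of (n!/(p!q!r!))^2. Then for all n ≥ 2, n^2 * a_n - (10n^2 - 10n + 3)*a_{n-1} + 9*(n-1)^2*a_{n-2} = 0. -/
/-!
Summing first over the split `q + r = s` of the last two parts (Vandermonde) gives
`a n = ∑ k, (n choose k)² (2k choose k)`. The recurrence then follows by creative telescoping
(Zeilberger): for `n = m + 2`, the recurrence operator applied to the `k`-th summand equals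
`G m (k + 1) - G m k` with `G = sqTrinomialCert`, and `G m` vanishes at `k = 0` and for `k ≥ m + 3`.
-/

open Finset

lemma multinomial_univ_three_eq_choose_mul_choose (p q r : ℕ) :
    Nat.multinomial univ ![p, q, r] = (p + (q + r)).choose p * (q + r).choose q := by
  rw [Nat.multinomial_univ_three, add_assoc]
  refine Nat.div_eq_of_eq_mul_left (by positivity) ?_
  rw [← Nat.choose_mul_factorial_mul_factorial (Nat.le_add_right p (q + r)),
    Nat.add_sub_cancel_left, ← Nat.choose_mul_factorial_mul_factorial (Nat.le_add_right q r),
    Nat.add_sub_cancel_left]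
  ring

lemma sum_antidiagonal_choose_sq (s : ℕ) :
    ∑ y ∈ antidiagonal s, s.choose y.1 ^ 2 = s.centralBinom := by
  rw [Nat.centralBinom_eq_two_mul_choose, ← Nat.sum_range_choose_sq,
    Nat.sum_antidiagonal_eq_sum_range_succ_mk]

lemma sum_multinomial_sq_eq_sum_choose_sq_mul_centralBinom (n : ℕ) :
    ∑ x ∈ antidiagonal n, ∑ y ∈ antidiagonal x.2, Nat.multinomial univ ![x.1, y.1, y.2] ^ 2 =
      ∑ k ∈ range (n + 1), n.choose k ^ 2 * k.centralBinom := by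
  calc _ = ∑ x ∈ antidiagonal n, n.choose x.2 ^ 2 * x.2.centralBinom := by
        refine sum_congr rfl fun ⟨p, s⟩ hps => ?_
        rw [HasAntidiagonal.mem_antidiagonal] at hps
        subst hps
        dsimp only
        rw [← sum_antidiagonal_choose_sq, mul_sum]
        refine sum_congr rfl fun ⟨q, r⟩ hqr => ?_
        rw [HasAntidiagonal.mem_antidiagonal] at hqr
        subst hqr
        dsimp only
        rw [multinomial_univ_three_eq_choose_mul_choose, Nat.choose_symm_add, mul_pow]
    _ = ∑ x ∈ antidiagonal n, n.choose x.1 ^ 2 * x.1.centralBinom :=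
        Nat.sum_antidiagonal_swap (f := fun x => n.choose x.1 ^ 2 * x.1.centralBinom)
    _ = _ := Nat.sum_antidiagonal_eq_sum_range_succ_mk _ n

lemma natCast_succ_mul_choose_succ (n k : ℕ) :
    ((k : ℤ) + 1) * n.choose (k + 1) = ((n : ℤ) - k) * n.choose k := by
  rcases le_or_gt k n with hkn | hnk
  · have h := Nat.choose_succ_right_eq n k
    zify [hkn] at h
    linear_combination h
  · simp [Nat.choose_eq_zero_of_lt hnk, Nat.choose_eq_zero_of_lt (Nat.lt_succ_of_lt hnk)]

lemma natCast_succ_mul_choose (n k : ℕ) :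
    ((n : ℤ) + 1) * n.choose k = ((n : ℤ) + 1 - k) * (n + 1).choose k := by
  rcases le_or_gt k (n + 1) with hkn | hnk
  · have h := Nat.choose_mul_succ_eq n k
    zify [hkn] at h
    linear_combination h
  · simp [Nat.choose_eq_zero_of_lt hnk, Nat.choose_eq_zero_of_lt (Nat.lt_of_succ_lt hnk)]

def sqTrinomialTerm (n k : ℕ) : ℤ := (n.choose k : ℤ) ^ 2 * k.centralBinom

def sqTrinomialCert (m k : ℕ) : ℤ :=
  k * (3 * k - 4 * (m + 2)) * ((m + 1).choose (k - 1) : ℤ) ^ 2 * k.centralBinom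

lemma recurrence_sqTrinomialTerm_eq_sub (m k : ℕ) :
    ((m : ℤ) + 2) ^ 2 * sqTrinomialTerm (m + 2) k
      - (10 * ((m : ℤ) + 2) ^ 2 - 10 * ((m : ℤ) + 2) + 3) * sqTrinomialTerm (m + 1) k
      + 9 * ((m : ℤ) + 1) ^ 2 * sqTrinomialTerm m k
      = sqTrinomialCert m (k + 1) - sqTrinomialCert m k := by
  rcases k with _ | k
  · simp [sqTrinomialTerm, sqTrinomialCert, Nat.centralBinom_eq_two_mul_choose]
    ring
  have hv := natCast_succ_mul_choose_succ (m + 1) k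
  have hw := natCast_succ_mul_choose m (k + 1)
  have hT := Nat.succ_mul_centralBinom_succ (k + 1)
  zify at hT
  simp only [sqTrinomialTerm, sqTrinomialCert, Nat.add_sub_cancel, Nat.choose_succ_succ' (m + 1)]
  push_cast at hv hw ⊢
  -- After Pascal's rule the identity is a quadratic form in `C(m+1,k)`, `C(m+1,k+1)` that is
  -- divisible by the absorption relation `hv`; `hw`, `hT` eliminate `C(m,k+1)` and `C(2k+4,k+2)`.
  linear_combination (((3 * k + 1 - m) * ((m + 1).choose k : ℤ)
      + (-3 * k - 2 * m - 7) * ((m + 1).choose (k + 1) : ℤ)) * ((k + 1).centralBinom : ℤ)) * hv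
    + (9 * ((k + 1).centralBinom : ℤ) * ((m + 1) * (m.choose (k + 1) : ℤ)
      + (m - k) * ((m + 1).choose (k + 1) : ℤ))) * hw
    - ((3 * k - 4 * m - 2) * ((m + 1).choose (k + 1) : ℤ) ^ 2) * hT

lemma sum_range_sqTrinomialTerm_of_lt {n N : ℕ} (h : n < N) :
    ∑ k ∈ range N, sqTrinomialTerm n k = ∑ k ∈ range (n + 1), sqTrinomialTerm n k := by
  refine (sum_subset (range_subset_range.2 h) fun k _ hk => ?_).symm
  simp [sqTrinomialTerm, Nat.choose_eq_zero_of_lt (by simpa using hk : n < k)]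

lemma recurrence_sum_range_sqTrinomialTerm {m N : ℕ} (hN : m + 3 ≤ N) :
    ((m : ℤ) + 2) ^ 2 * ∑ k ∈ range N, sqTrinomialTerm (m + 2) k
      - (10 * ((m : ℤ) + 2) ^ 2 - 10 * ((m : ℤ) + 2) + 3) * ∑ k ∈ range N, sqTrinomialTerm (m + 1) k
      + 9 * ((m : ℤ) + 1) ^ 2 * ∑ k ∈ range N, sqTrinomialTerm m k = 0 := by
  have hcert_zero : sqTrinomialCert m 0 = 0 := by simp [sqTrinomialCert]
  have hcert_N : sqTrinomialCert m N = 0 := by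
    simp [sqTrinomialCert, Nat.choose_eq_zero_of_lt (by omega : m + 1 < N - 1)]
  simp only [mul_sum, ← sum_sub_distrib, ← sum_add_distrib, recurrence_sqTrinomialTerm_eq_sub,
    sum_range_sub, hcert_zero, hcert_N, sub_zero]

theorem recurrence_N3_ones (f : ℕ → ℤ)
    (hf : ∀ n : ℕ, f n = ∑ x ∈ Finset.HasAntidiagonal.antidiagonal n, ∑ y ∈ Finset.HasAntidiagonal.antidiagonal x.2,
      ((Nat.multinomial Finset.univ ![x.1, y.1, y.2] : ℤ)) ^ 2) :
    ∀ n : ℕ, 2 ≤ n →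
      (n : ℤ) ^ 2 * f n - (10 * (n : ℤ) ^ 2 - 10 * (n : ℤ) + 3) * f (n - 1)
        + 9 * ((n : ℤ) - 1) ^ 2 * f (n - 2) = 0 := by
  have hf_sum {n N : ℕ} (h : n < N) : f n = ∑ k ∈ range N, sqTrinomialTerm n k := by
    rw [hf, sum_range_sqTrinomialTerm_of_lt h]
    unfold sqTrinomialTerm
    exact_mod_cast sum_multinomial_sq_eq_sum_choose_sq_mul_centralBinom n
  intro n hn
  obtain ⟨m, rfl⟩ := Nat.exists_eq_add_of_le' hn
  rw [Nat.add_sub_cancel, show m + 2 - 1 = m + 1 by omega, hf_sum (N := m + 3) (by omega),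
    hf_sum (N := m + 3) (by omega), hf_sum (N := m + 3) (by omega)]
  push_cast
  linear_combination recurrence_sum_range_sqTrinomialTerm (m := m) le_rfl
end

section
/- Define a_n = sum over 5-tuples of non-negative integers (p1,...,p5) summing to n of (n!/(p1!...p5!))^2. Then for all n ≥ 3, n^4*a_n - (35n^4 - 70n^3 + 63n^2 - 28n + 5)*a_{n-1} + (n-1)^2*(259*(n-1)^2 + 26)*a_{n-2} - 225*(n-1)^2*(n-2)^2*a_{n-3} = 0. -/
/-!
Let `Y = ∑ Xᵏ / k!²`, so that `a_n / n!²` is the `n`-th coefficient of `Y⁵`, and let `θ = X d/dX`.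
Then `θY = Z` and `θZ = XY`, so `θ` maps each product `W_i = Y^(5-i) Z^i` to
`(5 - i) W_(i+1) + i X W_(i-1)`. On coefficients this is a first-order system
`n w_i(n) = (5 - i) w_(i+1)(n) + i w_(i-1)(n-1)`, and eliminating `w_1, …, w_5` from it leaves
a four-term recurrence for `w_0(n) = a_n / n!²`, which is the claimed one after clearing factorials.
-/

open PowerSeries Nat Finset

theorem Derivation.leibniz_pow_mul_pow {R A : Type*} [CommSemiring R] [CommSemiring A]
    [Algebra R A] (D : Derivation R A A) {x y z : A} (hy : D y = z) (hz : D z = x * y)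
    (a b : ℕ) :
    D (y ^ a * z ^ b) = a • (y ^ (a - 1) * z ^ (b + 1)) + b • (x * (y ^ (a + 1) * z ^ (b - 1))) := by
  rw [leibniz, leibniz_pow, leibniz_pow, hy, hz]
  simp only [smul_eq_mul, nsmul_eq_mul]
  ring

theorem Nat.cast_multinomial_five {K : Type*} [Field K] [CharZero K] (a b c d e : ℕ) :
    (multinomial univ ![a, b, c, d, e] : K) =
      (a + b + c + d + e)! / (a ! * b ! * c ! * d ! * e !) := by
  have h := multinomial_spec univ ![a, b, c, d, e]
  simp only [Fin.prod_univ_five, Fin.sum_univ_five, Matrix.cons_val] at h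
  rw [eq_div_iff (by simp [factorial_ne_zero]), ← h]
  push_cast
  ring

namespace PowerSeries

variable {R : Type*} [CommSemiring R]

noncomputable def eulerOperator : Derivation R R⟦X⟧ R⟦X⟧ := (X : R⟦X⟧) • derivative R

theorem coeff_eulerOperator (f : R⟦X⟧) (n : ℕ) : coeff n (eulerOperator f) = n * coeff n f := by
  rcases n with _ | n
  · simp [eulerOperator]
  · simp [eulerOperator, coeff_succ_X_mul, coeff_derivative, mul_comm]

end PowerSeries

/-- `I₀(2√X)`. -/
noncomputable def besselSeries : ℚ⟦X⟧ := mk fun k => ((k ! : ℚ) ^ 2)⁻¹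

theorem eulerOperator_eulerOperator_besselSeries :
    eulerOperator (eulerOperator besselSeries) = X * besselSeries := by
  ext (_ | n)
  · simp [coeff_eulerOperator]
  · rw [coeff_eulerOperator, coeff_eulerOperator, coeff_succ_X_mul]
    simp only [besselSeries, coeff_mk, factorial_succ, cast_mul]
    field_simp

theorem factorial_sq_mul_coeff_besselSeries_pow_five (n : ℕ) :
    (n ! : ℚ) ^ 2 * coeff n (besselSeries ^ 5) =
      ∑ x ∈ antidiagonal n, ∑ y ∈ antidiagonal x.2, ∑ z ∈ antidiagonal y.2,
        ∑ w ∈ antidiagonal z.2, (multinomial univ ![x.1, y.1, z.1, w.1, w.2] : ℚ) ^ 2 := by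
  rw [show besselSeries ^ 5 =
    besselSeries * (besselSeries * (besselSeries * (besselSeries * besselSeries))) by ring]
  simp only [coeff_mul, besselSeries, coeff_mk, mul_sum]
  refine sum_congr rfl fun x hx => sum_congr rfl fun y hy => sum_congr rfl fun z hz =>
    sum_congr rfl fun w hw => ?_
  rw [HasAntidiagonal.mem_antidiagonal] at hx hy hz hw
  rw [Nat.cast_multinomial_five, show x.1 + y.1 + z.1 + w.1 + w.2 = n by omega]
  field_simp

noncomputable def besselCoeff (a b n : ℕ) : ℚ :=
  coeff n (besselSeries ^ a * eulerOperator besselSeries ^ b)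

theorem succ_mul_besselCoeff_succ (a b n : ℕ) :
    (n + 1) * besselCoeff a b (n + 1) =
      a * besselCoeff (a - 1) (b + 1) (n + 1) + b * besselCoeff (a + 1) (b - 1) n := by
  have h := congrArg (coeff (n + 1)) ((eulerOperator (R := ℚ)).leibniz_pow_mul_pow
    (y := besselSeries) rfl eulerOperator_eulerOperator_besselSeries a b)
  rw [coeff_eulerOperator, map_add, map_nsmul, map_nsmul, coeff_succ_X_mul] at h
  simpa only [besselCoeff, nsmul_eq_mul, cast_add, cast_one] using h

section Elimination

local notation "c" => besselCoeff 5 0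

theorem besselCoeff_four_one_eq (n : ℕ) :
    5 * besselCoeff 4 1 (n + 1) = (n + 1) * c (n + 1) := by
  linear_combination -succ_mul_besselCoeff_succ 5 0 n

theorem besselCoeff_three_two_eq (n : ℕ) :
    20 * besselCoeff 3 2 (n + 1) = (n + 1) ^ 2 * c (n + 1) - 5 * c n := by
  linear_combination -5 * succ_mul_besselCoeff_succ 4 1 n + (n + 1) * besselCoeff_four_one_eq n

theorem besselCoeff_two_three_eq (n : ℕ) :
    60 * besselCoeff 2 3 (n + 2) = (n + 2) ^ 3 * c (n + 2) - (13 * n + 18) * c (n + 1) := by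
  have h32 := succ_mul_besselCoeff_succ 3 2 (n + 1)
  have e32 := besselCoeff_three_two_eq (n + 1)
  push_cast at h32 e32
  linear_combination -20 * h32 + (n + 2) * e32 - 8 * besselCoeff_four_one_eq n

theorem besselCoeff_one_four_eq (n : ℕ) :
    120 * besselCoeff 1 4 (n + 2) = (n + 2) ^ 4 * c (n + 2)
      - ((n + 2) * (13 * n + 18) + 9 * (n + 1) ^ 2) * c (n + 1) + 45 * c n := by
  have h23 := succ_mul_besselCoeff_succ 2 3 (n + 1)
  push_cast at h23
  linear_combination -60 * h23 + (n + 2) * besselCoeff_two_three_eq n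
    - 9 * besselCoeff_three_two_eq n

theorem besselCoeff_five_zero_recurrence (n : ℕ) :
    (n + 3) ^ 6 * c (n + 3)
      - (35 * (n + 3) ^ 4 - 70 * (n + 3) ^ 3 + 63 * (n + 3) ^ 2 - 28 * (n + 3) + 5) * c (n + 2)
      + (259 * (n + 2) ^ 2 + 26) * c (n + 1) - 225 * c n = 0 := by
  have h14 := succ_mul_besselCoeff_succ 1 4 (n + 2)
  have h05 := succ_mul_besselCoeff_succ 0 5 (n + 2)
  have e14 := besselCoeff_one_four_eq (n + 1)
  push_cast at h14 h05 e14
  linear_combination 120 * (n + 3) * h14 + 120 * h05 - (n + 3) ^ 2 * e14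
    + 8 * (n + 3) * besselCoeff_two_three_eq n + 5 * besselCoeff_one_four_eq n

end Elimination

theorem recurrence_N5_ones (f : ℕ → ℤ)
    (hf : ∀ n : ℕ, f n = ∑ x ∈ Finset.HasAntidiagonal.antidiagonal n, ∑ y ∈ Finset.HasAntidiagonal.antidiagonal x.2,
      ∑ z ∈ Finset.HasAntidiagonal.antidiagonal y.2, ∑ w ∈ Finset.HasAntidiagonal.antidiagonal z.2,
        ((Nat.multinomial Finset.univ ![x.1, y.1, z.1, w.1, w.2] : ℤ)) ^ 2) :
    ∀ n : ℕ, 3 ≤ n →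
      (n : ℤ) ^ 4 * f n
        - (35 * (n : ℤ) ^ 4 - 70 * (n : ℤ) ^ 3 + 63 * (n : ℤ) ^ 2 - 28 * (n : ℤ) + 5) * f (n - 1)
        + ((n : ℤ) - 1) ^ 2 * (259 * ((n : ℤ) - 1) ^ 2 + 26) * f (n - 2)
        - 225 * ((n : ℤ) - 1) ^ 2 * ((n : ℤ) - 2) ^ 2 * f (n - 3) = 0 := by
  have hf_coeff (k : ℕ) : (f k : ℚ) = (k ! : ℚ) ^ 2 * besselCoeff 5 0 k := by
    rw [besselCoeff, pow_zero, mul_one, factorial_sq_mul_coeff_besselSeries_pow_five, hf]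
    norm_cast
  intro n hn
  obtain ⟨m, rfl⟩ : ∃ m, n = m + 3 := ⟨n - 3, by omega⟩
  rw [show m + 3 - 1 = m + 2 by omega, show m + 3 - 2 = m + 1 by omega, show m + 3 - 3 = m by omega]
  qify
  rw [hf_coeff, hf_coeff, hf_coeff, hf_coeff]
  simp only [factorial_succ]
  push_cast
  linear_combination ((m + 2) * (m + 1) * (m ! : ℚ)) ^ 2 * besselCoeff_five_zero_recurrence m
end

section
/- Let α_1, α_2 be complex numbers. Then for every n, n * Σ_{p+q=n} p*q*α_1^p α_2^q binom(n,p)^2 = n^2 * ( α_1 * Σ_{p+q=n-1} q * α_1^p α_2^q binom(n-1,p)^2 + α_2 * Σ_{p+q=n-1} p * α_1^p α_2^q binom(n-1,p)^2 ), where the sums run over non-negative integers p, q. -/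
theorem aux_relation_N2 (α₁ α₂ : ℂ) :
    ∀ n : ℕ, 1 ≤ n →
      (n : ℂ) * ∑ pq ∈ Finset.HasAntidiagonal.antidiagonal n,
          (pq.1 : ℂ) * (pq.2 : ℂ) * α₁ ^ pq.1 * α₂ ^ pq.2 * ((n.choose pq.1 : ℂ)) ^ 2
        = (n : ℂ) ^ 2 *
          (α₁ * ∑ pq ∈ Finset.HasAntidiagonal.antidiagonal (n - 1),
              (pq.2 : ℂ) * α₁ ^ pq.1 * α₂ ^ pq.2 * (((n - 1).choose pq.1 : ℂ)) ^ 2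
           + α₂ * ∑ pq ∈ Finset.HasAntidiagonal.antidiagonal (n - 1),
              (pq.1 : ℂ) * α₁ ^ pq.1 * α₂ ^ pq.2 * (((n - 1).choose pq.1 : ℂ)) ^ 2) := by
  intro n hn
  obtain ⟨m, rfl⟩ : ∃ m, n = m + 1 := ⟨n - 1, (Nat.succ_pred_eq_of_pos hn).symm⟩
  simp only [Nat.add_sub_cancel]
  -- key choose identity, cast to ℂ
  have hchoose : ∀ a b : ℕ, ((a + 1 : ℕ) : ℂ) * ((m + 1).choose (a + 1) : ℂ)
      = ((m + 1 : ℕ) : ℂ) * ((m.choose a : ℕ) : ℂ) := by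
    intro a b
    have h : (a + 1) * (m + 1).choose (a + 1) = (m + 1) * m.choose a := by
      rw [Nat.add_one_mul_choose_eq m a]; exact Nat.mul_comm _ _
    exact_mod_cast congrArg (Nat.cast (R := ℂ)) h
  have step1 :
      ((m + 1 : ℕ) : ℂ) * ∑ pq ∈ Finset.HasAntidiagonal.antidiagonal (m + 1),
          (pq.1 : ℂ) * (pq.2 : ℂ) * α₁ ^ pq.1 * α₂ ^ pq.2 * (((m + 1).choose pq.1 : ℂ)) ^ 2
      = (∑ pq ∈ Finset.HasAntidiagonal.antidiagonal (m + 1),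
          (pq.1 : ℂ)^2 * (pq.2 : ℂ) * α₁ ^ pq.1 * α₂ ^ pq.2 * (((m + 1).choose pq.1 : ℂ)) ^ 2)
      + (∑ pq ∈ Finset.HasAntidiagonal.antidiagonal (m + 1),
          (pq.1 : ℂ) * (pq.2 : ℂ)^2 * α₁ ^ pq.1 * α₂ ^ pq.2 * (((m + 1).choose pq.1 : ℂ)) ^ 2) := by
    rw [Finset.mul_sum, ← Finset.sum_add_distrib]
    refine Finset.sum_congr rfl fun pq hpq => ?_
    have h : pq.1 + pq.2 = m + 1 := Finset.HasAntidiagonal.mem_antidiagonal.mp hpq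
    have hc : ((pq.1 : ℂ) + pq.2) = ((m + 1 : ℕ) : ℂ) := by exact_mod_cast congrArg (Nat.cast (R := ℂ)) h
    rw [← hc]; ring
  rw [step1]
  rw [Finset.Nat.sum_antidiagonal_succ
    (f := fun pq => (pq.1 : ℂ)^2 * (pq.2 : ℂ) * α₁ ^ pq.1 * α₂ ^ pq.2 * (((m + 1).choose pq.1 : ℂ)) ^ 2)]
  rw [Finset.Nat.sum_antidiagonal_succ'
    (f := fun pq => (pq.1 : ℂ) * (pq.2 : ℂ)^2 * α₁ ^ pq.1 * α₂ ^ pq.2 * (((m + 1).choose pq.1 : ℂ)) ^ 2)]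
  simp only [Nat.cast_zero, Nat.cast_add, Nat.cast_one]
  have e1 : ∀ pq ∈ Finset.HasAntidiagonal.antidiagonal m,
      ((pq.1 : ℂ) + 1)^2 * (pq.2 : ℂ) * α₁ ^ (pq.1 + 1) * α₂ ^ pq.2 * (((m + 1).choose (pq.1 + 1) : ℂ)) ^ 2
      = ((m + 1 : ℕ) : ℂ)^2 * α₁ * ((pq.2 : ℂ) * α₁ ^ pq.1 * α₂ ^ pq.2 * ((m.choose pq.1 : ℂ)) ^ 2) := by
    intro pq hpq
    have h1 := hchoose pq.1 pq.2
    push_cast at h1 ⊢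
    calc ((pq.1 : ℂ) + 1)^2 * (pq.2 : ℂ) * α₁ ^ (pq.1 + 1) * α₂ ^ pq.2 * (((m + 1).choose (pq.1 + 1) : ℂ)) ^ 2
        = (((pq.1:ℂ) + 1) * ((m + 1).choose (pq.1 + 1) : ℂ))^2 * ((pq.2 : ℂ) * α₁ ^ (pq.1+1) * α₂ ^ pq.2) := by ring
      _ = (((m:ℂ) + 1) * ((m.choose pq.1 : ℕ) : ℂ))^2 * ((pq.2 : ℂ) * α₁ ^ (pq.1+1) * α₂ ^ pq.2) := by rw [h1]
      _ = ((m:ℂ) + 1)^2 * α₁ * ((pq.2 : ℂ) * α₁ ^ pq.1 * α₂ ^ pq.2 * ((m.choose pq.1 : ℂ)) ^ 2) := by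
          rw [pow_succ]; ring
  have e2 : ∀ pq ∈ Finset.HasAntidiagonal.antidiagonal m,
      (pq.1 : ℂ) * ((pq.2 : ℂ) + 1)^2 * α₁ ^ pq.1 * α₂ ^ (pq.2 + 1) * (((m + 1).choose pq.1 : ℂ)) ^ 2
      = ((m + 1 : ℕ) : ℂ)^2 * α₂ * ((pq.1 : ℂ) * α₁ ^ pq.1 * α₂ ^ pq.2 * ((m.choose pq.1 : ℂ)) ^ 2) := by
    intro pq hpq
    have h : pq.1 + pq.2 = m := Finset.HasAntidiagonal.mem_antidiagonal.mp hpq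
    have hsym : (m + 1).choose pq.1 = (m + 1).choose (pq.2 + 1) := by
      have : pq.1 = (m + 1) - (pq.2 + 1) := by omega
      rw [this, Nat.choose_symm (by omega)]
    have hsym2 : m.choose pq.2 = m.choose pq.1 := by
      have : pq.2 = m - pq.1 := by omega
      rw [this, Nat.choose_symm (by omega)]
    have h1 := hchoose pq.2 pq.1
    rw [hsym2] at h1
    push_cast at h1 ⊢
    calc (pq.1 : ℂ) * ((pq.2 : ℂ) + 1)^2 * α₁ ^ pq.1 * α₂ ^ (pq.2 + 1) * (((m + 1).choose pq.1 : ℂ)) ^ 2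
        = (((pq.2:ℂ) + 1) * ((m + 1).choose (pq.2 + 1) : ℂ))^2 * ((pq.1 : ℂ) * α₁ ^ pq.1 * α₂ ^ (pq.2+1)) := by
          rw [hsym]; ring
      _ = (((m:ℂ) + 1) * ((m.choose pq.1 : ℕ) : ℂ))^2 * ((pq.1 : ℂ) * α₁ ^ pq.1 * α₂ ^ (pq.2+1)) := by rw [h1]
      _ = ((m:ℂ) + 1)^2 * α₂ * ((pq.1 : ℂ) * α₁ ^ pq.1 * α₂ ^ pq.2 * ((m.choose pq.1 : ℂ)) ^ 2) := by
          rw [pow_succ]; ring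
  rw [Finset.sum_congr rfl e1, Finset.sum_congr rfl e2, ← Finset.mul_sum, ← Finset.mul_sum]
  push_cast
  ring
end

section
/- Fix N ≥ 1 and define the auxiliary sums a_n^{N,j} = Σ over (p_1,...,p_N) with Σp_i = n of (n!/(p_1!⋯p_N!))^2 * p_1*p_2*⋯*p_j, for 0 ≤ j ≤ N (with a_n^{N,0} = a_n^N and a_n^{N,N+1} = 0). Then for all 0 ≤ j ≤ N and n ≥ 1: n * a_n^{N,j} = (N-j) * a_n^{N,j+1} + j * n^2 * a_{n-1}^{N,j-1}, where a_{n}^{N,-1} = 0. -/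
/-!
Multiplying the sum by `n = ∑ k, p k` splits it into one sum per coordinate `k`. If `k` is not
among the weighted coordinates, `p k` just enlarges the weight set by one. If it is, the weight
contains `p k ^ 2`, and `multinomial (q + e_k) * (q k + 1) = n * multinomial q` turns
`multinomial p ^ 2 * p k ^ 2` into `n ^ 2 * multinomial (p - e_k) ^ 2`, which shifts the sum to
level `n - 1` with one weighted coordinate fewer. Since permuting coordinates preserves
multinomial coefficients, every such sum depends only on the number of weighted coordinates.
-/

open Finset
open scoped Pointwise

section
variable {ι : Type*} [Fintype ι]

theorem Nat.multinomial_univ_comp_perm (σ : Equiv.Perm ι) (p : ι → ℕ) :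
    Nat.multinomial univ (p ∘ σ) = Nat.multinomial univ p := by
  simp only [Nat.multinomial, Function.comp_apply, Equiv.sum_comp σ p,
    Equiv.prod_comp σ (fun i => (p i).factorial)]

variable [DecidableEq ι]

theorem Nat.multinomial_univ_add_single_mul (p : ι → ℕ) (k : ι) :
    Nat.multinomial univ (p + Pi.single k 1) * (p k + 1) =
      (∑ i, p i + 1) * Nat.multinomial univ p := by
  have hrest : ∀ q : ι → ℕ, Nat.multinomial univ q =
      (q k + ∑ i ∈ univ.erase k, q i).choose (q k) * Nat.multinomial (univ.erase k) q := by
    intro q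
    rw [← Nat.multinomial_insert (notMem_erase k univ), insert_erase (mem_univ k)]
  have hoff : ∀ i ∈ univ.erase k, (p + Pi.single k 1 : ι → ℕ) i = p i := fun i hi => by
    simp [ne_of_mem_erase hi]
  rw [hrest, hrest p, Nat.multinomial_congr hoff, sum_congr rfl hoff,
    ← add_sum_erase univ p (mem_univ k), ← mul_assoc, Nat.add_one_mul_choose_eq]
  simp only [Pi.add_apply, Pi.single_eq_same, add_right_comm _ 1]
  ring

theorem Finset.sum_piAntidiag_univ_comp_perm {M : Type*} [AddCommMonoid M] (σ : Equiv.Perm ι)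
    (n : ℕ) (f : (ι → ℕ) → M) :
    ∑ p ∈ piAntidiag univ n, f (p ∘ σ) = ∑ p ∈ piAntidiag univ n, f p := by
  refine sum_nbij' (· ∘ σ) (· ∘ σ.symm) ?_ ?_ ?_ ?_ (fun _ _ => rfl)
  all_goals intro p
  · simp [Equiv.sum_comp σ p]
  · simp [Equiv.sum_comp σ.symm p]
  · intro; ext; simp
  · intro; ext; simp

theorem Finset.sum_piAntidiag_univ_succ_smul_apply {M : Type*} [AddCommMonoid M]
    (f : (ι → ℕ) → M) (n : ℕ) (k : ι) :
    ∑ p ∈ piAntidiag univ (n + 1), p k • f p =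
      ∑ q ∈ piAntidiag univ n, (q k + 1) • f (q + Pi.single k 1) := by
  symm
  refine sum_bij_ne_zero (fun q _ _ => q + Pi.single k 1) ?_ ?_ ?_ ?_
  · intro q hq _
    simp_all [sum_add_distrib]
  · intro q₁ _ _ q₂ _ _ h
    exact add_right_cancel h
  · intro p hp hne
    have hpk : p k ≠ 0 := by rintro h; simp [h] at hne
    have hp' : p - Pi.single k 1 + Pi.single k 1 = p := by
      ext i; rcases eq_or_ne i k with rfl | h <;> simp [*]; omega
    refine ⟨p - Pi.single k 1, ?_, ?_, hp'⟩
    · have := congrArg (∑ i, · i) hp'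
      simp_all [sum_add_distrib]
    · simpa [hp', Nat.sub_add_cancel (Nat.one_le_iff_ne_zero.2 hpk)] using hne
  · intro q _ _
    simp

/-- The paper's `a_n^{N,j}` is `sqMultinomialProdSum n {i | i < j}` over `ι = Fin N`. -/
def sqMultinomialProdSum (n : ℕ) (s : Finset ι) : ℕ :=
  ∑ p ∈ piAntidiag univ n, Nat.multinomial univ p ^ 2 * ∏ i ∈ s, p i

theorem sqMultinomialProdSum_perm_smul (σ : Equiv.Perm ι) (n : ℕ) (s : Finset ι) :
    sqMultinomialProdSum n (σ • s) = sqMultinomialProdSum n s := by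
  rw [sqMultinomialProdSum, sqMultinomialProdSum, ← sum_piAntidiag_univ_comp_perm σ⁻¹]
  refine sum_congr rfl fun p _ => ?_
  rw [Nat.multinomial_univ_comp_perm, smul_finset_def, prod_image (by simp)]
  simp

theorem sqMultinomialProdSum_eq_of_card_eq {s t : Finset ι} (h : #s = #t) (n : ℕ) :
    sqMultinomialProdSum n s = sqMultinomialProdSum n t := by
  obtain ⟨σ, hσ⟩ := (Set.powersetCard.isPretransitive (α := ι) (n := #t)).exists_smul_eq
    ⟨s, h⟩ ⟨t, rfl⟩
  have hst : σ • s = t := by simpa using congrArg Subtype.val hσ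
  rw [← hst, sqMultinomialProdSum_perm_smul]

theorem sum_sqMultinomial_prod_mul_apply_of_mem {s : Finset ι} {k : ι} (hk : k ∈ s) (n : ℕ) :
    ∑ p ∈ piAntidiag univ (n + 1), p k * (Nat.multinomial univ p ^ 2 * ∏ i ∈ s, p i) =
      (n + 1) ^ 2 * sqMultinomialProdSum n (s.erase k) := by
  have hsplit : ∀ p : ι → ℕ, p k * (Nat.multinomial univ p ^ 2 * ∏ i ∈ s, p i) =
      p k • (Nat.multinomial univ p ^ 2 * p k * ∏ i ∈ s.erase k, p i) := fun p => by
    rw [← mul_prod_erase s _ hk, smul_eq_mul]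
    ring
  rw [sum_congr rfl fun p _ => hsplit p, sum_piAntidiag_univ_succ_smul_apply,
    sqMultinomialProdSum, mul_sum]
  refine sum_congr rfl fun q hq => ?_
  have hoff : ∏ i ∈ s.erase k, (q + Pi.single k 1 : ι → ℕ) i = ∏ i ∈ s.erase k, q i :=
    prod_congr rfl fun i hi => by simp [ne_of_mem_erase hi]
  have hM := Nat.multinomial_univ_add_single_mul q k
  rw [(mem_piAntidiag.1 hq).1] at hM
  rw [smul_eq_mul, hoff, Pi.add_apply, Pi.single_eq_same]
  calc _ = (Nat.multinomial univ (q + Pi.single k 1) * (q k + 1)) ^ 2 *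
          ∏ i ∈ s.erase k, q i := by ring
    _ = _ := by rw [hM]; ring

theorem succ_mul_sqMultinomialProdSum_succ (n : ℕ) (s : Finset ι) :
    (n + 1) * sqMultinomialProdSum (n + 1) s =
      ∑ k ∈ sᶜ, sqMultinomialProdSum (n + 1) (insert k s) +
        (n + 1) ^ 2 * ∑ k ∈ s, sqMultinomialProdSum n (s.erase k) := by
  have hsplit : (n + 1) * sqMultinomialProdSum (n + 1) s = ∑ k, ∑ p ∈ piAntidiag univ (n + 1),
      p k * (Nat.multinomial univ p ^ 2 * ∏ i ∈ s, p i) := by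
    rw [sqMultinomialProdSum, mul_sum, sum_comm]
    refine sum_congr rfl fun p hp => ?_
    rw [← sum_mul, (mem_piAntidiag.1 hp).1]
  have hnotMem : ∀ k ∈ sᶜ, ∑ p ∈ piAntidiag univ (n + 1),
      p k * (Nat.multinomial univ p ^ 2 * ∏ i ∈ s, p i) =
        sqMultinomialProdSum (n + 1) (insert k s) := by
    intro k hk
    refine sum_congr rfl fun p _ => ?_
    rw [prod_insert (mem_compl.1 hk)]
    ring
  rw [hsplit, ← sum_compl_add_sum s, sum_congr rfl hnotMem,
    sum_congr rfl fun k hk => sum_sqMultinomial_prod_mul_apply_of_mem hk n, mul_sum]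

end

theorem aux_relation_ones_general (N : ℕ) (a : ℕ → ℕ → ℕ)
    (ha : ∀ n j, a n j = ∑ p ∈ Finset.Nat.antidiagonalTuple N n,
      (Nat.multinomial Finset.univ p) ^ 2 *
        ∏ i ∈ Finset.univ.filter (fun i : Fin N => (i : ℕ) < j), p i) :
    ∀ j, j ≤ N → ∀ n : ℕ, 1 ≤ n →
      n * a n j = (N - j) * a n (j + 1) + j * n ^ 2 * a (n - 1) (j - 1) := by
  intro j hj n hn
  obtain ⟨n, rfl⟩ := Nat.exists_eq_add_of_le' hn
  have ha' : ∀ n m, a n m = sqMultinomialProdSum n {i : Fin N | (i : ℕ) < m} := fun n m => by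
    rw [ha, sqMultinomialProdSum, piAntidiag_univ_fin_eq_antidiagonalTuple]
  have hcard : ∀ m ≤ N, #{i : Fin N | (i : ℕ) < m} = m := fun m hm => by
    rw [Fin.card_filter_val_lt, min_eq_right hm]
  set s : Finset (Fin N) := {i | (i : ℕ) < j}
  have hs : #s = j := hcard j hj
  have hinsert : ∀ k ∈ sᶜ, sqMultinomialProdSum (n + 1) (insert k s) = a (n + 1) (j + 1) := by
    intro k hk
    have hcard_insert : #(insert k s) = j + 1 := by
      rw [card_insert_of_notMem (mem_compl.1 hk), hs]
    rw [ha']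
    exact sqMultinomialProdSum_eq_of_card_eq
      (by rw [hcard_insert, hcard _ (by simpa [hcard_insert] using card_le_univ (insert k s))]) _
  have herase : ∀ k ∈ s, sqMultinomialProdSum n (s.erase k) = a n (j - 1) := by
    intro k hk
    rw [ha']
    exact sqMultinomialProdSum_eq_of_card_eq
      (by rw [card_erase_of_mem hk, hs, hcard _ (by omega)]) _
  rw [ha' (n + 1) j, succ_mul_sqMultinomialProdSum_succ, sum_congr rfl hinsert,
    sum_congr rfl herase, sum_const, sum_const, card_compl, hs, Fintype.card_fin, smul_eq_mul,
    smul_eq_mul, Nat.add_sub_cancel]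
  ring

theorem aux_relation_ones (N : ℕ) (hN : 1 ≤ N) (a : ℕ → ℕ → ℕ)
    (ha : ∀ n j, a n j = ∑ p ∈ Finset.Nat.antidiagonalTuple N n,
      (Nat.multinomial Finset.univ p) ^ 2 *
        ∏ i ∈ Finset.univ.filter (fun i : Fin N => (i : ℕ) < j), p i) :
    ∀ j, j ≤ N → ∀ n : ℕ, 1 ≤ n →
      n * a n j = (N - j) * a n (j + 1) + j * n ^ 2 * a (n - 1) (j - 1) :=
  aux_relation_ones_general N a ha
end

section
/- Define c_n = Σ_{p=0}^n binomial(n,p)^3 (sums of cubes of binomial coefficients, Franel numbers). Then for all n ≥ 2: n^2 * c_n = (7n^2 - 7n + 2) * c_{n-1} + 8*(n-1)^2 * c_{n-2}. -/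
private def gg (m : ℕ) : ℕ → ℤ
  | 0 => 0
  | 1 => -(14 * (m : ℤ) ^ 2 + 33 * m + 20)
  | (k + 2) =>
      4 * ((m : ℤ) + 1) ^ 2 * ((m.choose k : ℤ)) ^ 3 +
        (3 * (9 * (m : ℤ) + 10) * ((k : ℤ) + 1) - (14 * (m : ℤ) ^ 2 + 33 * m + 20)
          - 18 * ((k : ℤ) + 1) ^ 2) * (((m + 1).choose (k + 1) : ℤ)) ^ 3

private lemma ptw (m k : ℕ) (hk : k ≤ m + 2) :
    ((m : ℤ) + 2) ^ 2 * (((m + 2).choose k : ℤ)) ^ 3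
      - (7 * (m : ℤ) ^ 2 + 21 * m + 16) * (((m + 1).choose k : ℤ)) ^ 3
      - 8 * ((m : ℤ) + 1) ^ 2 * ((m.choose k : ℤ)) ^ 3
    = gg m (k + 1) - gg m k := by
  match k with
  | 0 =>
    show _ = gg m 1 - gg m 0
    simp only [gg, Nat.choose_zero_right, Nat.cast_one]
    push_cast
    ring
  | 1 =>
    show _ = gg m (0 + 2) - gg m 1
    simp only [gg, show (0:ℕ) + 1 = 1 from rfl, Nat.choose_one_right,
      Nat.choose_zero_right, Nat.cast_one]
    push_cast
    ring
  | (j + 2) =>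
    rcases eq_or_lt_of_le hk with heq | hlt
    · -- k = m + 2, i.e. j = m
      have hj : j = m := by omega
      subst hj
      rw [show j + 2 + 1 = (j + 1) + 2 from by omega]
      simp only [gg, Nat.choose_self,
        show j.choose (j + 1) = 0 from Nat.choose_succ_self j,
        show (j + 1).choose (j + 1 + 1) = 0 from Nat.choose_succ_self (j + 1),
        show (j + 1).choose (j + 2) = 0 from Nat.choose_eq_zero_of_lt (by omega),
        show j.choose (j + 2) = 0 from Nat.choose_eq_zero_of_lt (by omega)]
      push_cast
      ring
    · have hj : j + 1 ≤ m := by omega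
      rw [show j + 2 + 1 = (j + 1) + 2 from by omega]
      simp only [gg]
      -- raw relations
      have h1n := Nat.add_one_mul_choose_eq (m + 1) (j + 1)
      have h2n := Nat.add_one_mul_choose_eq m (j + 1)
      have h3n := Nat.add_one_mul_choose_eq m j
      have h4n := Nat.choose_succ_right_eq m (j + 1)
      have h5n := Nat.choose_succ_right_eq m j
      simp only [Nat.succ_eq_add_one, show m + 1 + 1 = m + 2 from by omega,
        show j + 1 + 1 = j + 2 from by omega] at h1n h2n h3n h4n
      have h1 : (((m + 2).choose (j + 2) : ℤ)) * ((j : ℤ) + 2)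
          = ((m : ℤ) + 2) * (((m + 1).choose (j + 1) : ℤ)) := by
        exact_mod_cast h1n.symm
      have h2 : (((m + 1).choose (j + 2) : ℤ)) * ((j : ℤ) + 2)
          = ((m : ℤ) + 1) * ((m.choose (j + 1) : ℤ)) := by
        exact_mod_cast h2n.symm
      have h3 : (((m + 1).choose (j + 1) : ℤ)) * ((j : ℤ) + 1)
          = ((m : ℤ) + 1) * ((m.choose j : ℤ)) := by
        exact_mod_cast h3n.symm
      have h4 : ((m.choose (j + 2) : ℤ)) * ((j : ℤ) + 2)
          = ((m : ℤ) - (j : ℤ) - 1) * ((m.choose (j + 1) : ℤ)) := by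
        zify [hj] at h4n
        linear_combination h4n
      have h5 : ((m.choose (j + 1) : ℤ)) * ((j : ℤ) + 1)
          = ((m : ℤ) - (j : ℤ)) * ((m.choose j : ℤ)) := by
        have hj' : j ≤ m := by omega
        zify [hj'] at h5n
        linear_combination h5n
      have H1 : ((((m + 2).choose (j + 2) : ℤ)) * ((j : ℤ) + 2)) ^ 3
          = (((m : ℤ) + 2) * (((m + 1).choose (j + 1) : ℤ))) ^ 3 := by rw [h1]
      have H2 : ((((m + 1).choose (j + 2) : ℤ)) * ((j : ℤ) + 2)) ^ 3
          = (((m : ℤ) + 1) * ((m.choose (j + 1) : ℤ))) ^ 3 := by rw [h2]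
      have H3 : ((((m + 1).choose (j + 1) : ℤ)) * ((j : ℤ) + 1)) ^ 3
          = (((m : ℤ) + 1) * ((m.choose j : ℤ))) ^ 3 := by rw [h3]
      have H4 : (((m.choose (j + 2) : ℤ)) * ((j : ℤ) + 2)) ^ 3
          = (((m : ℤ) - (j : ℤ) - 1) * ((m.choose (j + 1) : ℤ))) ^ 3 := by rw [h4]
      have H5 : (((m.choose (j + 1) : ℤ)) * ((j : ℤ) + 1)) ^ 3
          = (((m : ℤ) - (j : ℤ)) * ((m.choose j : ℤ))) ^ 3 := by rw [h5]
      push_cast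
      set M : ℤ := (m : ℤ)
      set J : ℤ := (j : ℤ)
      refine mul_left_cancel₀ (a := (J + 1) ^ 3 * (J + 2) ^ 3)
        (by positivity) ?_
      linear_combination
        ((M + 2) ^ 2 * (J + 1) ^ 3) * H1
        + ((-(7 * M ^ 2 + 21 * M + 16)
            - (3 * (9 * M + 10) * (J + 2) - (14 * M ^ 2 + 33 * M + 20) - 18 * (J + 2) ^ 2))
            * (J + 1) ^ 3) * H2
        + ((M + 2) ^ 5
            + (3 * (9 * M + 10) * (J + 1) - (14 * M ^ 2 + 33 * M + 20) - 18 * (J + 1) ^ 2)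
              * (J + 2) ^ 3) * H3
        + (-8 * (M + 1) ^ 2 * (J + 1) ^ 3) * H4
        + (-(7 * M ^ 2 + 21 * M + 16) * (M + 1) ^ 3
            - (3 * (9 * M + 10) * (J + 2) - (14 * M ^ 2 + 33 * M + 20) - 18 * (J + 2) ^ 2)
              * (M + 1) ^ 3
            - 8 * (M + 1) ^ 2 * (M - J - 1) ^ 3
            - 4 * (M + 1) ^ 2 * (J + 2) ^ 3) * H5

private lemma key (m : ℕ) :
    ((m : ℤ) + 2) ^ 2 * ∑ k ∈ Finset.range (m + 3), (((m + 2).choose k : ℤ)) ^ 3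
      = (7 * (m : ℤ) ^ 2 + 21 * m + 16) * ∑ k ∈ Finset.range (m + 2), (((m + 1).choose k : ℤ)) ^ 3
        + 8 * ((m : ℤ) + 1) ^ 2 * ∑ k ∈ Finset.range (m + 1), ((m.choose k : ℤ)) ^ 3 := by
  have tele : ∑ k ∈ Finset.range (m + 3),
      (((m : ℤ) + 2) ^ 2 * (((m + 2).choose k : ℤ)) ^ 3
        - (7 * (m : ℤ) ^ 2 + 21 * m + 16) * (((m + 1).choose k : ℤ)) ^ 3
        - 8 * ((m : ℤ) + 1) ^ 2 * ((m.choose k : ℤ)) ^ 3)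
      = gg m (m + 3) - gg m 0 := by
    rw [← Finset.sum_range_sub (gg m)]
    refine Finset.sum_congr rfl fun k hk => ?_
    exact ptw m k (by have := Finset.mem_range.mp hk; omega)
  have hgtop : gg m (m + 3) = 0 := by
    rw [show m + 3 = (m + 1) + 2 from by omega]
    simp [gg, Nat.choose_succ_self,
      show (m + 1).choose (m + 1 + 1) = 0 from Nat.choose_succ_self (m + 1)]
  have hg0 : gg m 0 = 0 := rfl
  rw [hgtop, hg0, sub_zero] at tele
  have split : ∑ k ∈ Finset.range (m + 3),
      (((m : ℤ) + 2) ^ 2 * (((m + 2).choose k : ℤ)) ^ 3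
        - (7 * (m : ℤ) ^ 2 + 21 * m + 16) * (((m + 1).choose k : ℤ)) ^ 3
        - 8 * ((m : ℤ) + 1) ^ 2 * ((m.choose k : ℤ)) ^ 3)
      = ((m : ℤ) + 2) ^ 2 * ∑ k ∈ Finset.range (m + 3), (((m + 2).choose k : ℤ)) ^ 3
        - (7 * (m : ℤ) ^ 2 + 21 * m + 16) * ∑ k ∈ Finset.range (m + 3), (((m + 1).choose k : ℤ)) ^ 3
        - 8 * ((m : ℤ) + 1) ^ 2 * ∑ k ∈ Finset.range (m + 3), ((m.choose k : ℤ)) ^ 3 := by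
    rw [Finset.mul_sum, Finset.mul_sum, Finset.mul_sum, ← Finset.sum_sub_distrib,
      ← Finset.sum_sub_distrib]
  have p1 : ∑ k ∈ Finset.range (m + 3), (((m + 1).choose k : ℤ)) ^ 3
      = ∑ k ∈ Finset.range (m + 2), (((m + 1).choose k : ℤ)) ^ 3 := by
    rw [show m + 3 = (m + 2) + 1 from rfl, Finset.sum_range_succ,
      show (m + 1).choose (m + 2) = 0 from Nat.choose_succ_self (m + 1)]
    simp
  have p2 : ∑ k ∈ Finset.range (m + 3), ((m.choose k : ℤ)) ^ 3
      = ∑ k ∈ Finset.range (m + 1), ((m.choose k : ℤ)) ^ 3 := by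
    rw [show m + 3 = (m + 2) + 1 from rfl, Finset.sum_range_succ,
      show m + 2 = (m + 1) + 1 from rfl, Finset.sum_range_succ,
      show m.choose (m + 1) = 0 from Nat.choose_succ_self m,
      show m.choose (m + 1 + 1) = 0 from Nat.choose_eq_zero_of_lt (by omega)]
    simp
  rw [split, p1, p2] at tele
  linarith [tele]

theorem franel_recurrence (c : ℕ → ℕ)
    (hc : ∀ n : ℕ, c n = ∑ p ∈ Finset.range (n + 1), (n.choose p) ^ 3) :
    ∀ n : ℕ, 2 ≤ n →
      n ^ 2 * c n = (7 * n ^ 2 - 7 * n + 2) * c (n - 1) + 8 * (n - 1) ^ 2 * c (n - 2) := by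
  intro n hn
  obtain ⟨m, rfl⟩ : ∃ m, n = m + 2 := ⟨n - 2, by omega⟩
  have e1 : m + 2 - 1 = m + 1 := by omega
  have e2 : m + 2 - 2 = m := by omega
  rw [hc (m + 2), hc (m + 2 - 1), hc (m + 2 - 2), e1, e2]
  have h7 : 7 * (m + 2) ≤ 7 * (m + 2) ^ 2 := by nlinarith
  zify [h7]
  rw [show m + 2 + 1 = m + 3 from rfl, show m + 1 + 1 = m + 2 from rfl]
  linear_combination key m
end
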